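/- arXiv:2409.02949 — 2 statements merged into one kernel-verified Lean document; each statement's English description precedes it below -/
import Mathlib

section
/- For every x < 0, Ei(x) = γ + log(-x) + ∑_{n≥1} xⁿ/(n·n!), where Ei(x) = ∫_{-∞}^x e^t/t dt is an ordinary convergent improper integral. -/
/-!
For `y < 0` put `F y = γ + log (-y) + S y` with `S = expIntegralSeries`. Termwise differentiation
gives `S' y = (exp y - 1) / y`, so `F' y = exp y / y`, and the theorem reduces to `F y → 0` as
`y → -∞`. Since `(1 - exp (-u)) log u + S (-u)` is an antiderivative of `exp (-u) log u` vanishing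
at `0⁺`, we get `log Y + S (-Y) = ∫₀^Y exp (-u) log u + exp (-Y) log Y` for `Y > 0`, which tends
to `∫₀^∞ exp (-u) log u = Γ'(1) = -γ`.
-/

open Real MeasureTheory Set Filter Topology

theorem integrableOn_exp_neg_mul_log :
    IntegrableOn (fun t => exp (-t) * log t) (Ioi 0) := by
  rw [← Ioc_union_Ioi_eq_Ioi zero_le_one]
  refine IntegrableOn.union ?_ ?_
  · have hlog : IntegrableOn log (Ioc 0 1) :=
      (intervalIntegrable_iff_integrableOn_Ioc_of_le zero_le_one).1
        intervalIntegral.intervalIntegrable_log'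
    refine hlog.norm.mono' (by fun_prop) ?_
    filter_upwards [ae_restrict_mem measurableSet_Ioc] with t ht
    rw [norm_mul, norm_of_nonneg (exp_pos _).le]
    exact mul_le_of_le_one_left (norm_nonneg _) (exp_le_one_iff.2 (by linarith [ht.1]))
  · have hΓ := (GammaIntegral_convergent two_pos).mono_set (Ioi_subset_Ioi zero_le_one)
    refine hΓ.mono' (by fun_prop) ?_
    filter_upwards [ae_restrict_mem measurableSet_Ioi] with t (ht : 1 < t)
    rw [norm_mul, norm_of_nonneg (exp_pos _).le, norm_of_nonneg (log_nonneg ht.le)]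
    rw [show (2 : ℝ) - 1 = 1 by norm_num, rpow_one]
    gcongr
    linarith [log_le_sub_one_of_pos (by linarith : 0 < t)]

theorem integral_exp_neg_mul_log :
    ∫ t in Ioi 0, exp (-t) * log t = -eulerMascheroniConstant := by
  have hI := Complex.hasDerivAt_GammaIntegral (s := 1) (by norm_num)
  have hΓ : HasDerivAt Complex.Gamma _ 1 := hI.congr_of_eventuallyEq <| by
    filter_upwards [Complex.continuous_re.isOpen_preimage _ isOpen_Ioi |>.mem_nhds
      (by norm_num : (1 : ℂ).re ∈ Ioi 0)] with s hs
    exact Complex.Gamma_eq_integral hs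
  have h := hΓ.unique Complex.hasDerivAt_Gamma_one
  simp only [sub_self, Complex.cpow_zero, one_mul] at h
  rw [← Complex.ofReal_inj, ← integral_complex_ofReal]
  simpa only [Complex.ofReal_mul, Complex.ofReal_neg, mul_comm] using h

noncomputable def expIntegralSeries (x : ℝ) : ℝ :=
  ∑' n : ℕ, x ^ (n + 1) / ((n + 1) * Nat.factorial (n + 1))

theorem expIntegralSeries_zero : expIntegralSeries 0 = 0 := by
  simp [expIntegralSeries]

theorem hasDerivAt_expIntegralSeries (y : ℝ) :
    HasDerivAt expIntegralSeries (∑' n : ℕ, y ^ n / Nat.factorial (n + 1)) y := by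
  set R := |y| + 1
  have hbound : ∀ (n : ℕ) (z : ℝ), |z| ≤ R →
      ‖z ^ n / Nat.factorial (n + 1)‖ ≤ R ^ n / Nat.factorial n := by
    intro n z hz
    rw [norm_div, norm_pow, Real.norm_eq_abs, RCLike.norm_natCast]
    gcongr
    exact n.le_succ
  unfold expIntegralSeries
  refine hasDerivAt_tsum_of_isPreconnected (Real.summable_pow_div_factorial R) Metric.isOpen_ball
    (convex_ball 0 R).isPreconnected (fun n z _ => ?_) (fun n z hz => hbound n z ?_)
    (Metric.mem_ball_self (by positivity)) (by simp) (by simp [R])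
  · refine ((hasDerivAt_pow (n + 1) z).div_const _).congr_deriv ?_
    rw [Nat.add_sub_cancel, Nat.cast_add_one, mul_div_mul_left _ _ (by positivity)]
  · simpa using (mem_ball_zero_iff.1 hz).le

theorem continuous_expIntegralSeries : Continuous expIntegralSeries :=
  continuous_iff_continuousAt.2 fun y => (hasDerivAt_expIntegralSeries y).continuousAt

theorem mul_tsum_pow_div_factorial_succ (y : ℝ) :
    y * ∑' n : ℕ, y ^ n / Nat.factorial (n + 1) = exp y - 1 := by
  rw [← tsum_mul_left, exp_eq_exp_ℝ,
    (NormedSpace.expSeries_div_hasSum_exp y).tsum_eq.symm,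
    (Real.summable_pow_div_factorial y).tsum_eq_zero_add]
  simp [pow_succ, mul_div_assoc', mul_comm]

theorem hasDerivAt_expIntegralSeries_of_ne_zero {y : ℝ} (hy : y ≠ 0) :
    HasDerivAt expIntegralSeries ((exp y - 1) / y) y := by
  rw [← mul_tsum_pow_div_factorial_succ, mul_div_cancel_left₀ _ hy]
  exact hasDerivAt_expIntegralSeries y

theorem tendsto_one_sub_exp_neg_mul_log_nhdsGT_zero :
    Tendsto (fun u => (1 - exp (-u)) * log u) (𝓝[>] 0) (𝓝 0) := by
  have h := (tendsto_log_mul_rpow_nhdsGT_zero one_pos).norm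
  simp only [rpow_one, norm_zero] at h
  refine squeeze_zero_norm' ?_ h
  filter_upwards [self_mem_nhdsWithin] with u (hu : 0 < u)
  have hnonneg : 0 ≤ 1 - exp (-u) := by linarith [exp_le_one_iff.2 (neg_nonpos.2 hu.le)]
  have hle : 1 - exp (-u) ≤ u := by linarith [add_one_le_exp (-u)]
  rw [norm_mul, norm_mul, mul_comm, norm_of_nonneg hnonneg, norm_of_nonneg hu.le]
  gcongr

theorem tendsto_exp_neg_mul_log_atTop : Tendsto (fun u => exp (-u) * log u) atTop (𝓝 0) := by
  refine squeeze_zero' ?_ ?_ (by simpa using tendsto_pow_mul_exp_neg_atTop_nhds_zero 1)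
  · filter_upwards [eventually_ge_atTop 1] with u hu
    exact mul_nonneg (exp_pos _).le (log_nonneg hu)
  · filter_upwards [eventually_gt_atTop 0] with u hu
    rw [mul_comm]
    gcongr
    linarith [log_le_sub_one_of_pos hu]

theorem integral_exp_neg_mul_log_eq {Y : ℝ} (hY : 0 < Y) :
    ∫ u in 0..Y, exp (-u) * log u = (1 - exp (-Y)) * log Y + expIntegralSeries (-Y) := by
  set g := fun u => (1 - exp (-u)) * log u + expIntegralSeries (-u)
  have hg : ∀ u ∈ Ioi (0 : ℝ), HasDerivAt g (exp (-u) * log u) u := by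
    intro u (hu : 0 < u)
    have h := ((((hasDerivAt_neg u).exp).const_sub 1).mul (hasDerivAt_log hu.ne')).add
      ((hasDerivAt_expIntegralSeries_of_ne_zero (neg_ne_zero.2 hu.ne')).comp u (hasDerivAt_neg u))
    refine h.congr_deriv ?_
    field_simp
    ring
  have h0 : Tendsto g (𝓝[>] 0) (𝓝 0) := by
    have hS := (continuous_expIntegralSeries.comp continuous_neg).tendsto 0
    simpa [expIntegralSeries_zero] using
      tendsto_one_sub_exp_neg_mul_log_nhdsGT_zero.add (hS.mono_left nhdsWithin_le_nhds)
  have hY' : Tendsto g (𝓝[<] Y) (𝓝 (g Y)) :=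
    (hg Y hY).continuousAt.tendsto.mono_left nhdsWithin_le_nhds
  rw [intervalIntegral.integral_eq_sub_of_hasDerivAt_of_tendsto hY (fun u hu => hg u hu.1)
    ((intervalIntegrable_iff_integrableOn_Ioc_of_le hY.le).2
      (integrableOn_exp_neg_mul_log.mono_set Ioc_subset_Ioi_self)) h0 hY', sub_zero]

theorem tendsto_log_add_expIntegralSeries_neg :
    Tendsto (fun Y => log Y + expIntegralSeries (-Y)) atTop (𝓝 (-eulerMascheroniConstant)) := by
  have h := (intervalIntegral_tendsto_integral_Ioi 0 integrableOn_exp_neg_mul_log tendsto_id).add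
    tendsto_exp_neg_mul_log_atTop
  rw [integral_exp_neg_mul_log, add_zero] at h
  refine h.congr' ?_
  filter_upwards [eventually_gt_atTop 0] with Y hY
  rw [id, integral_exp_neg_mul_log_eq hY]
  ring

theorem integrableOn_exp_div_Iic {x : ℝ} (hx : x < 0) :
    IntegrableOn (fun t => exp t / t) (Iic x) := by
  refine ((integrableOn_exp_Iic x).div_const (-x)).mono'
    (measurable_exp.div measurable_id).aestronglyMeasurable ?_
  filter_upwards [ae_restrict_mem measurableSet_Iic] with t (ht : t ≤ x)
  rw [norm_div, norm_of_nonneg (exp_pos t).le, norm_of_nonpos (by linarith)]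
  gcongr
  linarith

theorem stmt_15 (x : ℝ) (hx : x < 0) :
    (∫ t in Set.Iic x, Real.exp t / t)
      = Real.eulerMascheroniConstant + Real.log (-x)
        + ∑' n : ℕ, x ^ (n + 1) / ((n + 1) * Nat.factorial (n + 1)) := by
  set F := fun y => eulerMascheroniConstant + log (-y) + expIntegralSeries y
  have hF : ∀ y ∈ Iic x, HasDerivAt F (exp y / y) y := fun y (hy : y ≤ x) => by
    have hy0 : y < 0 := hy.trans_lt hx
    refine ((((hasDerivAt_neg y).log (neg_ne_zero.2 hy0.ne)).const_add _).add
      (hasDerivAt_expIntegralSeries_of_ne_zero hy0.ne)).congr_deriv ?_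
    field_simp
    ring
  have hF_atBot : Tendsto F atBot (𝓝 0) := by
    have h := (tendsto_log_add_expIntegralSeries_neg.comp tendsto_neg_atBot_atTop).const_add
      eulerMascheroniConstant
    simpa [F, add_assoc, Function.comp_def] using h
  rw [integral_Iic_of_hasDerivAt_of_tendsto' hF (integrableOn_exp_div_Iic hx) hF_atBot, sub_zero]
  rfl
end

section
/- For every x > 0, ∫₁^x e^t/t dt = log x + e^x ∑_{n≥0} (-1)^{n+1} H_n xⁿ/n! + e ∑_{n≥0} (-1)ⁿ H_n/n!. -/
/-!
Put `g y = ∑ (-1)^(n+1) H_n y^n / n!`. Differentiating termwise and using `H_(n+1) - H_n = 1/(n+1)`,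
`g + g' = ∑ (-1)^n y^n / (n+1)! = (1 - e^(-y)) / y`, so `(e^y g)' = (e^y - 1) / y`. Hence
`log y + e^y g(y)` is an antiderivative of `e^y / y` on `(0, ∞)`, and the identity is the fundamental
theorem of calculus between `1` and `x`.
-/
open Real Set
open scoped Nat

lemma harmonic_le_self (n : ℕ) : harmonic n ≤ n := by
  induction n with
  | zero => simp
  | succ n ih =>
    rw [harmonic_succ]
    push_cast
    have : ((n : ℚ) + 1)⁻¹ ≤ 1 := inv_le_one_of_one_le₀ (by linarith [n.cast_nonneg (α := ℚ)])
    linarith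

lemma harmonic_nonneg (n : ℕ) : 0 ≤ harmonic n :=
  Finset.sum_nonneg fun _ _ => by positivity

section ExpGeneratingFunction

variable {c : ℕ → ℝ} {K : ℝ}

lemma summable_mul_pow_div_factorial (hc : ∀ n, |c n| ≤ K ^ n) (y : ℝ) :
    Summable fun n => c n * y ^ n / n ! := by
  refine Summable.of_norm_bounded (Real.summable_pow_div_factorial (K * |y|)) fun n => ?_
  rw [norm_div, norm_mul, norm_pow, Real.norm_eq_abs, Real.norm_eq_abs, RCLike.norm_natCast, mul_pow]
  gcongr
  exact hc n

theorem hasDerivAt_tsum_mul_pow_div_factorial (hc : ∀ n, |c n| ≤ K ^ n) (y : ℝ) :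
    HasDerivAt (fun z => ∑' n, c n * z ^ n / n !) (∑' n, c (n + 1) * y ^ n / n !) y := by
  have hshift : (fun z => ∑' n, c n * z ^ n / n !)
      = fun z => c 0 + ∑' n, c (n + 1) * z ^ (n + 1) / (n + 1)! := by
    funext z
    rw [(summable_mul_pow_div_factorial hc z).tsum_eq_zero_add]
    simp
  rw [hshift]
  refine HasDerivAt.const_add _ ?_
  set R := |y| + 1
  refine hasDerivAt_tsum_of_isPreconnected (u := fun n => K * ((K * R) ^ n / n !)) (y₀ := 0)
    (g := fun n z => c (n + 1) * z ^ (n + 1) / (n + 1)!) (g' := fun n z => c (n + 1) * z ^ n / n !)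
    ((Real.summable_pow_div_factorial _).mul_left K) Metric.isOpen_ball
    (convex_ball (0 : ℝ) R).isPreconnected (fun n z _ => ?_) (fun n z hz => ?_)
    (Metric.mem_ball_self (by positivity)) (by simp) (by simp [R])
  · refine (((hasDerivAt_pow (n + 1) z).const_mul (c (n + 1))).div_const _).congr_deriv ?_
    rw [Nat.factorial_succ, Nat.add_sub_cancel]
    push_cast
    field_simp
  · rw [mem_ball_zero_iff, Real.norm_eq_abs] at hz
    rw [norm_div, norm_mul, norm_pow, Real.norm_eq_abs, Real.norm_eq_abs, RCLike.norm_natCast,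
      mul_pow, ← mul_div_assoc, ← mul_assoc, ← _root_.pow_succ']
    gcongr
    · exact (abs_nonneg _).trans (hc (n + 1))
    · exact hc (n + 1)

end ExpGeneratingFunction

lemma hasSum_neg_one_pow_mul_pow_succ_div_factorial (y : ℝ) :
    HasSum (fun n : ℕ => (-1) ^ n * y ^ (n + 1) / (n + 1)!) (1 - exp (-y)) := by
  have h := ((hasSum_nat_add_iff' 1).mpr (NormedSpace.expSeries_div_hasSum_exp (-y))).neg
  rw [← Real.exp_eq_exp_ℝ, Finset.sum_range_one, pow_zero, Nat.factorial_zero, Nat.cast_one,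
    div_one, neg_sub] at h
  refine h.congr_fun fun n => ?_
  rw [neg_pow]
  ring

lemma neg_one_pow_mul_harmonic_add_succ (n : ℕ) :
    (-1) ^ (n + 1) * (harmonic n : ℝ) + (-1) ^ (n + 1 + 1) * (harmonic (n + 1) : ℝ)
      = (-1) ^ n / (n + 1) := by
  rw [harmonic_succ]
  push_cast
  field_simp
  ring

theorem hasDerivAt_exp_mul_tsum_harmonic {y : ℝ} (hy : y ≠ 0) :
    HasDerivAt (fun z => exp z * ∑' n : ℕ, (-1) ^ (n + 1) * (harmonic n : ℝ) * z ^ n / n !)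
      ((exp y - 1) / y) y := by
  set c : ℕ → ℝ := fun n => (-1) ^ (n + 1) * (harmonic n : ℝ)
  have habs : ∀ n, |c n| ≤ n := fun n => by
    rw [abs_mul, abs_pow, abs_neg, abs_one, one_pow, one_mul,
      abs_of_nonneg (by exact_mod_cast harmonic_nonneg n)]
    exact_mod_cast harmonic_le_self n
  have hc : ∀ n, |c n| ≤ 2 ^ n := fun n =>
    (habs n).trans (by exact_mod_cast n.lt_two_pow_self.le)
  have hc' : ∀ n, |c (n + 1)| ≤ 2 ^ n := fun n =>
    (habs (n + 1)).trans (by exact_mod_cast n.lt_two_pow_self)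
  have hsum : y * (∑' n, c n * y ^ n / n ! + ∑' n, c (n + 1) * y ^ n / n !) = 1 - exp (-y) := by
    rw [← (summable_mul_pow_div_factorial hc y).tsum_add
      (summable_mul_pow_div_factorial hc' y), ← tsum_mul_left]
    refine ((hasSum_neg_one_pow_mul_pow_succ_div_factorial y).congr_fun fun n => ?_).tsum_eq
    rw [← add_div, ← add_mul, neg_one_pow_mul_harmonic_add_succ, Nat.factorial_succ]
    push_cast
    field_simp
    ring
  refine ((hasDerivAt_exp y).mul (hasDerivAt_tsum_mul_pow_div_factorial hc y)).congr_deriv ?_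
  rw [eq_div_iff hy, ← mul_add, mul_assoc, mul_comm _ y, hsum, Real.exp_neg]
  field_simp

theorem stmt_18 (x : ℝ) (hx : 0 < x) :
    ∫ t in (1:ℝ)..x, Real.exp t / t
      = Real.log x
        + Real.exp x * ∑' n : ℕ, (-1) ^ (n + 1) * (harmonic n : ℝ) * x ^ n / Nat.factorial n
        + Real.exp 1 * ∑' n : ℕ, (-1) ^ n * (harmonic n : ℝ) / Nat.factorial n := by
  have hpos : ∀ t ∈ uIcc 1 x, 0 < t := fun t ht =>
    lt_of_lt_of_le (lt_min one_pos hx) ht.1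
  have hderiv : ∀ t ∈ uIcc 1 x, HasDerivAt
      (fun s => log s + exp s * ∑' n : ℕ, (-1) ^ (n + 1) * (harmonic n : ℝ) * s ^ n / n !)
      (exp t / t) t := fun t ht => by
    refine ((hasDerivAt_log (hpos t ht).ne').add
      (hasDerivAt_exp_mul_tsum_harmonic (hpos t ht).ne')).congr_deriv ?_
    field_simp
    ring
  have hint : IntervalIntegrable (fun t => exp t / t) MeasureTheory.volume 1 x :=
    (continuous_exp.continuousOn.div continuousOn_id fun t ht => (hpos t ht).ne').intervalIntegrable
  have hseries_one : ∑' n : ℕ, (-1) ^ (n + 1) * (harmonic n : ℝ) * 1 ^ n / n !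
      = -∑' n : ℕ, (-1) ^ n * (harmonic n : ℝ) / n ! := by
    rw [← tsum_neg]
    exact tsum_congr fun n => by ring
  rw [intervalIntegral.integral_eq_sub_of_hasDerivAt hderiv hint, log_one, hseries_one]
  ring
end
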